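/- arXiv:2603.21681 — 7 statements merged into one kernel-verified Lean document; each statement's English description precedes it below -/
import Mathlib

section
/- The following six-term sequence is exact: 0 → ker g_{D^{φ=1}}/im f_{D^{φ=1}} →^{δ₁} ker d₁/im d₀ →^{δ₂} (D′/(φ−1)D)^{τ=1,γ=1} →^{δ₃} D^{φ=1}/((τ−1)D^{φ=1} + (1−λ)D^{φ=1}) →^{δ₄} ker d₂/im d₁ →^{δ₅} ker g_{D′/(φ−1)D}/im f_{D′/(φ−1)D} → 0, where δ₁ sends the class of (y,z) to the class of (0,y,z); δ₂ sends the class of (x,y,z) to the class of x in D′/(φ−1)D; δ₃ sends the class of x to the class of (τ−1)y_x + (1−λ)z_x, where y_x, z_x ∈ D are any elements with (γ−1)x = (φ−1)y_x and (τ−1)x = (φ−1)z_x (such elements exist, the element (τ−1)y_x + (1−λ)z_x lies in D^{φ=1}, and its class is independent of all choices, so δ₃ is well defined); δ₄ sends the class of z to the class of (0,0,z); and δ₅ sends the class of (x,y,z) to the pair of classes of x and y in D′/(φ−1)D. In particular δ₁ is injective and δ₅ is surjective. -/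
/-- The six-term exact sequence
`0 → ker g_{D^{φ=1}}/im f_{D^{φ=1}} → ker d₁/im d₀ → (D′/(φ−1)D)^{τ=1,γ=1}
   → D^{φ=1}/((τ−1)+(1−λ)) → ker d₂/im d₁ → ker g_{D′/(φ−1)D}/im f_{D′/(φ−1)D} → 0`
with the maps `δ₁, …, δ₅` of the paper, stated elementwise on representatives
(well-definedness of the maps, injectivity of `δ₁`, exactness at the four middle spots,
and surjectivity of `δ₅`). -/
theorem six_term_exact_sequence
    {D' : Type*} [AddCommGroup D'] (D : AddSubgroup D')
    (γ τ lam : D' ≃+ D')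
    (γD τD lamD : D → D)
    (hγD : ∀ x : D, (↑(γD x) : D') = γ ↑x)
    (hτD : ∀ x : D, (↑(τD x) : D') = τ ↑x)
    (hlamD : ∀ x : D, (↑(lamD x) : D') = lam ↑x)
    (hγonto : ∀ y : D', y ∈ D → ∃ x ∈ D, γ x = y)
    (hτonto : ∀ y : D', y ∈ D → ∃ x ∈ D, τ x = y)
    (hlamonto : ∀ y : D', y ∈ D → ∃ x ∈ D, lam x = y)
    (φ : D →+ D')
    (hφγ : ∀ x : D, φ (γD x) = γ (φ x))
    (hφτ : ∀ x : D, φ (τD x) = τ (φ x))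
    (hφlam : ∀ x : D, φ (lamD x) = lam (φ x))
    (hmono : ∀ x : D', lam (τ x - x) = τ (γ x) - γ x) :
    -- δ₁ lands in ker d₁
    (∀ y z : D, φ y = ↑y → φ z = ↑z → τD y - y + (z - lamD z) = 0 →
      (γ (0 : D') - (0 : D') + ((↑y : D') - φ y) = 0 ∧
       τ (0 : D') - (0 : D') + ((↑z : D') - φ z) = 0 ∧
       τD y - y + (z - lamD z) = 0)) ∧
    -- δ₁ is well defined: the image of f_{D^{φ=1}} lies in the image of d₀
    (∀ w : D, φ w = ↑w → ∃ u : D,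
      φ u - ↑u = (0 : D') ∧ γD u - u = γD w - w ∧ τD u - u = τD w - w) ∧
    -- δ₁ is injective
    (∀ y z : D, φ y = ↑y → φ z = ↑z → τD y - y + (z - lamD z) = 0 →
      (∃ u : D, φ u - ↑u = (0 : D') ∧ γD u - u = y ∧ τD u - u = z) →
      ∃ w : D, φ w = ↑w ∧ γD w - w = y ∧ τD w - w = z) ∧
    -- δ₂ lands in the (τ = 1, γ = 1)-fixed part of D′/(φ−1)D
    (∀ (x : D') (y z : D),
      γ x - x + ((↑y : D') - φ y) = 0 → τ x - x + ((↑z : D') - φ z) = 0 →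
      τD y - y + (z - lamD z) = 0 →
      (∃ u : D, φ u - ↑u = γ x - x) ∧ (∃ u : D, φ u - ↑u = τ x - x)) ∧
    -- exactness at ker d₁ / im d₀
    (∀ (x : D') (y z : D),
      γ x - x + ((↑y : D') - φ y) = 0 → τ x - x + ((↑z : D') - φ z) = 0 →
      τD y - y + (z - lamD z) = 0 →
      ((∃ u : D, φ u - ↑u = x) ↔
        ∃ y' z' : D, φ y' = ↑y' ∧ φ z' = ↑z' ∧ τD y' - y' + (z' - lamD z') = 0 ∧
          ∃ w : D, (0 : D') - x = φ w - ↑w ∧ y' - y = γD w - w ∧ z' - z = τD w - w)) ∧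
    -- δ₃ is well defined: the elements y_x, z_x exist
    (∀ x : D', (∃ u : D, φ u - ↑u = γ x - x) → (∃ u : D, φ u - ↑u = τ x - x) →
      ∃ y z : D, φ y - ↑y = γ x - x ∧ φ z - ↑z = τ x - x) ∧
    -- δ₃ is well defined: (τ−1)y_x + (1−λ)z_x lies in D^{φ=1}
    (∀ (x : D') (y z : D), φ y - ↑y = γ x - x → φ z - ↑z = τ x - x →
      φ (τD y - y + (z - lamD z)) = ↑(τD y - y + (z - lamD z))) ∧
    -- δ₃ is well defined: independence of all choices
    (∀ (x x' : D') (y z y' z' : D),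
      (∃ u : D, φ u - ↑u = x - x') →
      φ y - ↑y = γ x - x → φ z - ↑z = τ x - x →
      φ y' - ↑y' = γ x' - x' → φ z' - ↑z' = τ x' - x' →
      ∃ a b : D, φ a = ↑a ∧ φ b = ↑b ∧
        (τD y - y + (z - lamD z)) - (τD y' - y' + (z' - lamD z')) =
          τD a - a + (b - lamD b)) ∧
    -- exactness at (D′/(φ−1)D)^{τ=1,γ=1}
    (∀ x : D', (∃ u : D, φ u - ↑u = γ x - x) → (∃ u : D, φ u - ↑u = τ x - x) →
      ((∀ y z : D, φ y - ↑y = γ x - x → φ z - ↑z = τ x - x →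
          ∃ a b : D, φ a = ↑a ∧ φ b = ↑b ∧
            τD y - y + (z - lamD z) = τD a - a + (b - lamD b)) ↔
        ∃ (x'' : D') (y' z' : D),
          (γ x'' - x'' + ((↑y' : D') - φ y') = 0 ∧
           τ x'' - x'' + ((↑z' : D') - φ z') = 0 ∧
           τD y' - y' + (z' - lamD z') = 0) ∧
          ∃ u : D, φ u - ↑u = x - x'')) ∧
    -- δ₄ is well defined: the image of g_{D^{φ=1}} lies in the image of d₁
    (∀ a b : D, φ a = ↑a → φ b = ↑b →
      ∃ (u : D') (v₁ v₂ : D),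
        γ u - u + ((↑v₁ : D') - φ v₁) = 0 ∧
        τ u - u + ((↑v₂ : D') - φ v₂) = 0 ∧
        τD v₁ - v₁ + (v₂ - lamD v₂) = τD a - a + (b - lamD b)) ∧
    -- exactness at D^{φ=1}/((τ−1)D^{φ=1} + (1−λ)D^{φ=1})
    (∀ w : D, φ w = ↑w →
      ((∃ (x : D') (y z : D), φ y - ↑y = γ x - x ∧ φ z - ↑z = τ x - x ∧
          ∃ a b : D, φ a = ↑a ∧ φ b = ↑b ∧
            w - (τD y - y + (z - lamD z)) = τD a - a + (b - lamD b)) ↔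
        ∃ (u : D') (v₁ v₂ : D),
          γ u - u + ((↑v₁ : D') - φ v₁) = 0 ∧
          τ u - u + ((↑v₂ : D') - φ v₂) = 0 ∧
          τD v₁ - v₁ + (v₂ - lamD v₂) = w)) ∧
    -- δ₅ lands in ker g_{D′/(φ−1)D}
    (∀ (x y : D') (z : D), τ x - x + (y - lam y) + (φ z - ↑z) = 0 →
      ∃ u : D, φ u - ↑u = τ x - x + (y - lam y)) ∧
    -- δ₅ is well defined: the image of d₁ lies in the image of f_{D′/(φ−1)D}
    (∀ (a : D') (b c : D), ∃ (u : D') (v₁ v₂ : D),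
      (γ a - a + ((↑b : D') - φ b)) - (γ u - u) = φ v₁ - ↑v₁ ∧
      (τ a - a + ((↑c : D') - φ c)) - (τ u - u) = φ v₂ - ↑v₂) ∧
    -- exactness at ker d₂ / im d₁
    (∀ (x y : D') (z : D), τ x - x + (y - lam y) + (φ z - ↑z) = 0 →
      ((∃ (u : D') (v₁ v₂ : D),
          x - (γ u - u) = φ v₁ - ↑v₁ ∧ y - (τ u - u) = φ v₂ - ↑v₂) ↔
        ∃ w : D, φ w = ↑w ∧ ∃ (a : D') (b c : D),
          γ a - a + ((↑b : D') - φ b) = x ∧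
          τ a - a + ((↑c : D') - φ c) = y ∧
          τD b - b + (c - lamD c) = z - w)) ∧
    -- δ₅ is surjective
    (∀ x y : D', (∃ u : D, φ u - ↑u = τ x - x + (y - lam y)) →
      ∃ (x' y' : D') (z : D),
        (τ x' - x' + (y' - lam y') + (φ z - ↑z) = 0) ∧
        ∃ (u : D') (v₁ v₂ : D),
          x' - x - (γ u - u) = φ v₁ - ↑v₁ ∧ y' - y - (τ u - u) = φ v₂ - ↑v₂) := by
  have key : ∀ u : D', lam (τ u) - lam u = τ (γ u) - γ u := fun u => by
    rw [← map_sub]; exact hmono u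
  have coeD : ∀ a b : D, ((a : D') = b) → a = b := fun a b h => Subtype.coe_injective h
  -- the independence-of-choices statement, used twice
  have indep : ∀ (x x' : D') (y z y' z' : D),
      (∃ u : D, φ u - ↑u = x - x') →
      φ y - ↑y = γ x - x → φ z - ↑z = τ x - x →
      φ y' - ↑y' = γ x' - x' → φ z' - ↑z' = τ x' - x' →
      ∃ a b : D, φ a = ↑a ∧ φ b = ↑b ∧
        (τD y - y + (z - lamD z)) - (τD y' - y' + (z' - lamD z')) =
          τD a - a + (b - lamD b) := by
    rintro x x' y z y' z' ⟨u, hu⟩ hy hz hy' hz'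
    have hγu : γ (φ u) - γ ↑u = γ x - γ x' := by rw [← map_sub, hu, map_sub]
    have hτu : τ (φ u) - τ ↑u = τ x - τ x' := by rw [← map_sub, hu, map_sub]
    refine ⟨y - y' - γD u + u, z - z' - τD u + u, ?_, ?_, ?_⟩
    · simp only [map_sub, map_add, hφγ, AddSubgroup.coe_sub, AddSubgroup.coe_add, hγD]
      linear_combination (norm := module) hy - hy' - hγu + hu
    · simp only [map_sub, map_add, hφτ, AddSubgroup.coe_sub, AddSubgroup.coe_add, hτD]
      linear_combination (norm := module) hz - hz' - hτu + hu
    · apply coeD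
      simp only [AddSubgroup.coe_sub, AddSubgroup.coe_add, hγD, hτD, hlamD, map_sub, map_add]
      linear_combination (norm := module) - key ↑u
  refine ⟨?_, ?_, ?_, ?_, ?_, ?_, ?_, indep, ?_, ?_, ?_, ?_, ?_, ?_, ?_⟩
  -- 1: δ₁ lands in ker d₁
  · intro y z hy hz h
    exact ⟨by rw [hy]; simp, by rw [hz]; simp, h⟩
  -- 2: δ₁ well defined
  · intro w hw
    exact ⟨w, by rw [hw, sub_self], rfl, rfl⟩
  -- 3: δ₁ injective
  · rintro y z hy hz h ⟨u, hu1, hu2, hu3⟩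
    exact ⟨u, sub_eq_zero.mp hu1, hu2, hu3⟩
  -- 4: δ₂ lands in fixed part
  · intro x y z h1 h2 h3
    exact ⟨⟨y, by linear_combination (norm := module) -h1⟩,
           ⟨z, by linear_combination (norm := module) -h2⟩⟩
  -- 5: exactness at ker d₁ / im d₀
  · intro x y z h1 h2 h3
    constructor
    · rintro ⟨u, hu⟩
      have hγu : γ (φ u) - γ ↑u = γ x := by rw [← map_sub, hu]
      have hτu : τ (φ u) - τ ↑u = τ x := by rw [← map_sub, hu]
      have h3' := congrArg (fun t : D => (t : D')) h3
      simp only [AddSubgroup.coe_sub, AddSubgroup.coe_add, AddSubgroup.coe_zero,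
        hτD, hlamD] at h3'
      refine ⟨y - γD u + u, z - τD u + u, ?_, ?_, ?_, -u, ?_, ?_, ?_⟩
      · simp only [map_sub, map_add, hφγ, AddSubgroup.coe_sub, AddSubgroup.coe_add, hγD]
        linear_combination (norm := module) -h1 + hu - hγu
      · simp only [map_sub, map_add, hφτ, AddSubgroup.coe_sub, AddSubgroup.coe_add, hτD]
        linear_combination (norm := module) -h2 + hu - hτu
      · apply coeD
        simp only [AddSubgroup.coe_sub, AddSubgroup.coe_add, AddSubgroup.coe_zero,
          hγD, hτD, hlamD, map_sub, map_add]
        linear_combination (norm := module) h3' + key ↑u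
      · simp only [map_neg, AddSubgroup.coe_neg]
        linear_combination (norm := module) hu
      · apply coeD
        simp only [AddSubgroup.coe_sub, AddSubgroup.coe_add, AddSubgroup.coe_neg, hγD, map_neg]
        module
      · apply coeD
        simp only [AddSubgroup.coe_sub, AddSubgroup.coe_add, AddSubgroup.coe_neg, hτD, map_neg]
        module
    · rintro ⟨y', z', hy', hz', h3', w, hw1, hw2, hw3⟩
      refine ⟨-w, ?_⟩
      simp only [map_neg, AddSubgroup.coe_neg]
      linear_combination (norm := module) hw1
  -- 6: δ₃ choices exist
  · rintro x ⟨y, hy⟩ ⟨z, hz⟩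
    exact ⟨y, z, hy, hz⟩
  -- 7: δ₃ lands in D^{φ=1}
  · intro x y z hy hz
    have hτy : τ (φ y) - τ ↑y = τ (γ x) - τ x := by rw [← map_sub, hy, map_sub]
    have hlz : lam (φ z) - lam ↑z = lam (τ x) - lam x := by rw [← map_sub, hz, map_sub]
    simp only [map_sub, map_add, hφτ, hφlam, AddSubgroup.coe_sub, AddSubgroup.coe_add,
      hτD, hlamD]
    linear_combination (norm := module) hτy - hy + hz - hlz - key x
  -- 9: exactness at fixed part
  · rintro x ⟨y0, hy0⟩ ⟨z0, hz0⟩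
    constructor
    · intro H
      obtain ⟨a, b, ha, hb, hab⟩ := H y0 z0 hy0 hz0
      have hab' := congrArg (fun t : D => (t : D')) hab
      simp only [AddSubgroup.coe_sub, AddSubgroup.coe_add, hτD, hlamD] at hab'
      refine ⟨x, y0 - a, z0 - b, ⟨?_, ?_, ?_⟩, 0, by simp⟩
      · simp only [map_sub, AddSubgroup.coe_sub]
        linear_combination (norm := module) -hy0 + ha
      · simp only [map_sub, AddSubgroup.coe_sub]
        linear_combination (norm := module) -hz0 + hb
      · apply coeD
        simp only [AddSubgroup.coe_sub, AddSubgroup.coe_add, AddSubgroup.coe_zero,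
          hτD, hlamD, map_sub, map_add]
        linear_combination (norm := module) hab'
    · rintro ⟨x'', y', z', ⟨e1, e2, e3⟩, u, hu⟩ y z hy hz
      have ey' : φ y' - ↑y' = γ x'' - x'' := by linear_combination (norm := module) -e1
      have ez' : φ z' - ↑z' = τ x'' - x'' := by linear_combination (norm := module) -e2
      obtain ⟨a, b, ha, hb, hab⟩ := indep x x'' y z y' z' ⟨u, hu⟩ hy hz ey' ez'
      exact ⟨a, b, ha, hb, by linear_combination (norm := module) hab + e3⟩
  -- 10: δ₄ well defined
  · intro a b ha hb
    exact ⟨0, a, b, by simp [ha], by simp [hb], rfl⟩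
  -- 11: exactness at D^{φ=1}/(...)
  · intro w hw
    constructor
    · rintro ⟨x, y, z, hy, hz, a, b, ha, hb, hab⟩
      have hab' := congrArg (fun t : D => (t : D')) hab
      simp only [AddSubgroup.coe_sub, AddSubgroup.coe_add, hτD, hlamD] at hab'
      refine ⟨x, y + a, z + b, ?_, ?_, ?_⟩
      · simp only [map_add, AddSubgroup.coe_add]
        linear_combination (norm := module) -hy - ha
      · simp only [map_add, AddSubgroup.coe_add]
        linear_combination (norm := module) -hz - hb
      · apply coeD
        simp only [AddSubgroup.coe_sub, AddSubgroup.coe_add, hτD, hlamD, map_sub, map_add]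
        linear_combination (norm := module) -hab'
    · rintro ⟨u, v₁, v₂, h1, h2, h3⟩
      have h3' := congrArg (fun t : D => (t : D')) h3
      simp only [AddSubgroup.coe_sub, AddSubgroup.coe_add, hτD, hlamD] at h3'
      refine ⟨u, v₁, v₂, ?_, ?_, 0, 0, by simp, by simp, ?_⟩
      · linear_combination (norm := module) -h1
      · linear_combination (norm := module) -h2
      · apply coeD
        simp only [AddSubgroup.coe_sub, AddSubgroup.coe_add, AddSubgroup.coe_zero,
          hτD, hlamD, map_sub, map_add, map_zero]
        linear_combination (norm := module) -h3'
  -- 12: δ₅ lands in ker g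
  · intro x y z h
    refine ⟨-z, ?_⟩
    simp only [map_neg, AddSubgroup.coe_neg]
    linear_combination (norm := module) -h
  -- 13: δ₅ well defined
  · intro a b c
    refine ⟨a, -b, -c, ?_, ?_⟩ <;>
    · simp only [map_neg, AddSubgroup.coe_neg]
      module
  -- 14: exactness at ker d₂ / im d₁
  · intro x y z h
    constructor
    · rintro ⟨u, v₁, v₂, h1, h2⟩
      have hτ1 := congrArg τ h1
      simp only [map_sub, map_add] at hτ1
      have hlam2 := congrArg lam h2
      simp only [map_sub, map_add] at hlam2
      refine ⟨z - (τD (-v₁) - (-v₁) + ((-v₂) - lamD (-v₂))), ?_, u, -v₁, -v₂, ?_, ?_, ?_⟩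
      · simp only [map_sub, map_add, map_neg, hφτ, hφlam, AddSubgroup.coe_sub,
          AddSubgroup.coe_add, AddSubgroup.coe_neg, hτD, hlamD]
        linear_combination (norm := module) h - hτ1 + h1 - h2 + hlam2 + key ↑u
      · simp only [map_neg, AddSubgroup.coe_neg]
        linear_combination (norm := module) -h1
      · simp only [map_neg, AddSubgroup.coe_neg]
        linear_combination (norm := module) -h2
      · abel
    · rintro ⟨w, hwφ, a, b, c, e1, e2, e3⟩
      refine ⟨a, -b, -c, ?_, ?_⟩ <;>
      · simp only [map_neg, AddSubgroup.coe_neg]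
        first
        | linear_combination (norm := module) -e1
        | linear_combination (norm := module) -e2
  -- 15: δ₅ surjective
  · rintro x y ⟨u, hu⟩
    refine ⟨x, y, -u, ?_, 0, 0, 0, ?_, ?_⟩
    · simp only [map_neg, AddSubgroup.coe_neg]
      linear_combination (norm := module) -hu
    · simp
    · simp
end

section
/- The following hold: (a) g ∘ f = 0; (b) γ and γ⁻¹ map M^{τ=1} into itself, and λ maps (τ−1)M onto (τ−1)M, so that λ induces an endomorphism λ̄ of M/(τ−1)M; (c) the sequence 0 → M^{τ=1}/(γ−1)M^{τ=1} → (ker g)/(im f) → (M/(τ−1)M)^{λ̄=1} → 0 is exact, where the first map is induced by x ↦ (x,0) and the second map is induced by (x,y) ↦ (class of y in M/(τ−1)M), and (M/(τ−1)M)^{λ̄=1} denotes the elements of M/(τ−1)M fixed by λ̄. -/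
/-- For an abelian group `M` with automorphisms `γ, τ, λ` satisfying the monodromy relation
`λ∘(τ−1) = (τ−1)∘γ`, with `f(x) = ((γ−1)x, (τ−1)x)` and `g(x,y) = (τ−1)x + (1−λ)y`:
(a) `g ∘ f = 0`; (b) `γ, γ⁻¹` preserve `M^{τ=1}` and `λ` maps `(τ−1)M` onto `(τ−1)M`;
(c) the sequence `0 → M^{τ=1}/(γ−1)M^{τ=1} → ker g / im f → (M/(τ−1)M)^{λ̄=1} → 0`
is exact (stated elementwise on representatives). -/
theorem Ginfty_three_term_complex
    {M : Type*} [AddCommGroup M] (γ τ lam : M ≃+ M)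
    (hmono : ∀ x : M, lam (τ x - x) = τ (γ x) - γ x) :
    -- (a) g ∘ f = 0
    (∀ x : M, (τ (γ x - x) - (γ x - x)) + ((τ x - x) - lam (τ x - x)) = 0) ∧
    -- (b) γ and γ⁻¹ preserve M^{τ=1}
    (∀ x : M, τ x = x → τ (γ x) = γ x) ∧
    (∀ x : M, τ x = x → τ (γ.symm x) = γ.symm x) ∧
    -- (b) λ maps (τ−1)M onto (τ−1)M
    (∀ x : M, ∃ y : M, lam (τ x - x) = τ y - y) ∧
    (∀ x : M, ∃ y : M, τ x - x = lam (τ y - y)) ∧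
    -- (c) exactness at M^{τ=1}/(γ−1)M^{τ=1}: the first map is injective
    (∀ x : M, τ x = x → (∃ w : M, γ w - w = x ∧ τ w - w = 0) →
      ∃ w : M, τ w = w ∧ γ w - w = x) ∧
    -- (c) the second map lands in the λ̄-fixed part of M/(τ−1)M
    (∀ x y : M, (τ x - x) + (y - lam y) = 0 → ∃ w : M, lam y - y = τ w - w) ∧
    -- (c) exactness at ker g / im f
    (∀ x y : M, (τ x - x) + (y - lam y) = 0 →
      ((∃ w : M, y = τ w - w) ↔
        ∃ x₀ w : M, τ x₀ = x₀ ∧ x - x₀ = γ w - w ∧ y = τ w - w)) ∧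
    -- (c) exactness at (M/(τ−1)M)^{λ̄=1}: the second map is surjective
    (∀ y : M, (∃ w : M, lam y - y = τ w - w) →
      ∃ x y₂ : M, ((τ x - x) + (y₂ - lam y₂) = 0) ∧ ∃ w : M, y₂ - y = τ w - w) := by

  refine ⟨?_, ?_, ?_, ?_, ?_, ?_, ?_, ?_, ?_⟩
  · intro x
    have h := hmono x
    simp only [map_sub, h]
    abel
  · intro x hx
    have h := hmono x
    rw [hx, sub_self, map_zero] at h
    exact sub_eq_zero.mp h.symm
  · intro x hx
    have h := hmono (γ.symm x)
    rw [γ.apply_symm_apply, hx, sub_self] at h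
    have := lam.injective (by rw [h, map_zero] : lam (τ (γ.symm x) - γ.symm x) = lam 0)
    exact sub_eq_zero.mp this
  · intro x
    exact ⟨γ x, hmono x⟩
  · intro x
    refine ⟨γ.symm x, ?_⟩
    rw [hmono, γ.apply_symm_apply]
  · rintro x hx ⟨w, hw1, hw2⟩
    exact ⟨w, sub_eq_zero.mp hw2, hw1⟩
  · intro x y h
    refine ⟨x, ?_⟩
    rw [eq_comm, ← sub_eq_zero, ← h]
    abel
  · intro x y h
    constructor
    · rintro ⟨w, rfl⟩
      have hm := hmono w
      rw [hm] at h
      refine ⟨x - (γ w - w), w, ?_, by abel, rfl⟩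
      rw [← sub_eq_zero, ← h]
      simp only [map_sub]
      abel
    · rintro ⟨x₀, w, _, _, hy⟩
      exact ⟨w, hy⟩
  · rintro y ⟨w, hw⟩
    refine ⟨w, y, ?_, 0, by simp⟩
    rw [← hw]
    abel
end

section
/- Let G be a group, H a normal subgroup of G, and M a G-module. Let c be a 2-cocycle on G with values in M such that c(g, h) = 0 and c(h, g) = 0 for all g ∈ G and h ∈ H. Then: (a) c(hg₁, g₂) = h·c(g₁, g₂) = c(g₁, g₂), c(g₁h, g₂) = c(g₁, g₂), and c(g₁, g₂h) = c(g₁, g₂) for all g₁, g₂ ∈ G and h ∈ H; (b) every value of c lies in M^H; (c) consequently c factors through a function c̄ : G/H × G/H → M^H, and c̄ is a 2-cocycle on the quotient group G/H with values in M^H (equipped with its induced G/H-action). -/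
/-- If a 2-cocycle `c` on `G` with values in a `G`-module `M` vanishes whenever either argument
lies in a normal subgroup `H`, then: (a) `c(hg₁,g₂) = h·c(g₁,g₂) = c(g₁,g₂)`,
`c(g₁h,g₂) = c(g₁,g₂)` and `c(g₁,g₂h) = c(g₁,g₂)`; (b) all values of `c` lie in `M^H`;
(c) `c` factors through a 2-cocycle `c̄` on `G/H` with values in `M^H` (with its induced
`G/H`-action). -/
theorem two_cocycle_descends_to_quotient
    {G : Type*} [Group G] {M : Type*} [AddCommGroup M] [DistribMulAction G M]
    (H : Subgroup G) [H.Normal] (c : G → G → M)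
    (hcoc : ∀ g₁ g₂ g₃ : G,
      g₁ • c g₂ g₃ - c (g₁ * g₂) g₃ + c g₁ (g₂ * g₃) - c g₁ g₂ = 0)
    (hvan₁ : ∀ g : G, ∀ h ∈ H, c g h = 0)
    (hvan₂ : ∀ g : G, ∀ h ∈ H, c h g = 0) :
    -- (a)
    (∀ g₁ g₂ : G, ∀ h ∈ H, c (h * g₁) g₂ = h • c g₁ g₂) ∧
    (∀ g₁ g₂ : G, ∀ h ∈ H, h • c g₁ g₂ = c g₁ g₂) ∧
    (∀ g₁ g₂ : G, ∀ h ∈ H, c (g₁ * h) g₂ = c g₁ g₂) ∧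
    (∀ g₁ g₂ : G, ∀ h ∈ H, c g₁ (g₂ * h) = c g₁ g₂) ∧
    -- (b) and (c)
    (∃ cbar : G ⧸ H → G ⧸ H → M,
      (∀ g₁ g₂ : G, cbar (g₁ : G ⧸ H) (g₂ : G ⧸ H) = c g₁ g₂) ∧
      (∀ q₁ q₂ : G ⧸ H, ∀ h ∈ H, h • cbar q₁ q₂ = cbar q₁ q₂) ∧
      (∀ g₁ : G, ∀ q₂ q₃ : G ⧸ H,
        g₁ • cbar q₂ q₃ - cbar ((g₁ : G ⧸ H) * q₂) q₃ +
          cbar (g₁ : G ⧸ H) (q₂ * q₃) - cbar (g₁ : G ⧸ H) q₂ = 0)) := by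
  have ha1 : ∀ g₁ g₂ : G, ∀ h ∈ H, c (h * g₁) g₂ = h • c g₁ g₂ := by
    intro g₁ g₂ h hh
    have := hcoc h g₁ g₂
    rw [hvan₂ (g₁ * g₂) h hh, hvan₂ g₁ h hh] at this
    have := sub_eq_zero.mp (by simpa using this)
    exact this.symm
  have ha4 : ∀ g₁ g₂ : G, ∀ h ∈ H, c g₁ (g₂ * h) = c g₁ g₂ := by
    intro g₁ g₂ h hh
    have := hcoc g₁ g₂ h
    rw [hvan₁ g₂ h hh, smul_zero, hvan₁ (g₁ * g₂) h hh] at this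
    exact sub_eq_zero.mp (by simpa using this)
  have ha3 : ∀ g₁ g₂ : G, ∀ h ∈ H, c (g₁ * h) g₂ = c g₁ g₂ := by
    intro g₁ g₂ h hh
    have := hcoc g₁ h g₂
    rw [hvan₂ g₂ h hh, smul_zero, hvan₁ g₁ h hh] at this
    have h2 : c g₁ (h * g₂) = c g₁ g₂ := by
      have : h * g₂ = g₂ * (g₂⁻¹ * h * g₂) := by group
      rw [this]
      exact ha4 g₁ g₂ _ (Subgroup.Normal.conj_mem' ‹H.Normal› h hh g₂)
    have h3 : c (g₁ * h) g₂ = c g₁ (h * g₂) := by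
      have := neg_add_eq_zero.mp (by simpa using this)
      exact this
    rw [h3, h2]
  have ha2 : ∀ g₁ g₂ : G, ∀ h ∈ H, h • c g₁ g₂ = c g₁ g₂ := by
    intro g₁ g₂ h hh
    rw [← ha1 g₁ g₂ h hh]
    have : h * g₁ = g₁ * (g₁⁻¹ * h * g₁) := by group
    rw [this]
    exact ha3 g₁ g₂ _ (Subgroup.Normal.conj_mem' ‹H.Normal› h hh g₁)
  refine ⟨ha1, ha2, ha3, ha4, fun q₁ q₂ => c q₁.out q₂.out, ?_, ?_, ?_⟩
  · intro g₁ g₂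
    beta_reduce
    obtain ⟨h₁, e₁⟩ := QuotientGroup.mk_out_eq_mul H g₁
    obtain ⟨h₂, e₂⟩ := QuotientGroup.mk_out_eq_mul H g₂
    rw [show ((g₁ : G ⧸ H)) = QuotientGroup.mk g₁ from rfl,
      show ((g₂ : G ⧸ H)) = QuotientGroup.mk g₂ from rfl, e₁, e₂,
      ha4 _ _ h₂ h₂.2, ha3 _ _ h₁ h₁.2]
  · intro q₁ q₂ h hh
    exact ha2 _ _ h hh
  · intro g₁ q₂ q₃
    have key : ∀ g₁ g₂ : G, c ((QuotientGroup.mk g₁ : G ⧸ H)).out ((QuotientGroup.mk g₂ : G ⧸ H)).out = c g₁ g₂ := by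
      intro g₁ g₂
      obtain ⟨h₁, e₁⟩ := QuotientGroup.mk_out_eq_mul H g₁
      obtain ⟨h₂, e₂⟩ := QuotientGroup.mk_out_eq_mul H g₂
      rw [e₁, e₂, ha4 _ _ h₂ h₂.2, ha3 _ _ h₁ h₁.2]
    induction q₂ using QuotientGroup.induction_on with | H g₂ => ?_
    induction q₃ using QuotientGroup.induction_on with | H g₃ => ?_
    beta_reduce
    rw [show ((g₁ : G ⧸ H) * (g₂ : G ⧸ H)) = ((g₁ * g₂ : G) : G ⧸ H) from rfl,
      show ((g₂ : G ⧸ H) * (g₃ : G ⧸ H)) = ((g₂ * g₃ : G) : G ⧸ H) from rfl,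
      key, key, key, key]
    exact hcoc g₁ g₂ g₃
end

section
/- Let G be a group, H a subgroup of G, and M a G-module. Let c′ be a 2-cocycle on G with values in M whose restriction to H × H is a coboundary, i.e., there is a function f′ : H → M with c′(h₁, h₂) = f′(h₁) − f′(h₁h₂) + h₁·f′(h₂) for all h₁, h₂ ∈ H. Then there exists a function f : G → M such that the 2-cocycle c := c′ − ∂f satisfies c(g, h) = 0 for all g ∈ G and h ∈ H. In other words, every 2-cocycle on G whose restriction to H × H is a coboundary is cohomologous to a 2-cocycle vanishing identically on G × H. -/
/-- Every 2-cocycle on `G` whose restriction to `H × H` is a coboundary is cohomologous to a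
2-cocycle vanishing identically on `G × H`. -/
theorem two_cocycle_cohomologous_to_vanishing_on_H
    {G : Type*} [Group G] {M : Type*} [AddCommGroup M] [DistribMulAction G M]
    (H : Subgroup G) (c' : G → G → M)
    (hcoc : ∀ g₁ g₂ g₃ : G,
      g₁ • c' g₂ g₃ - c' (g₁ * g₂) g₃ + c' g₁ (g₂ * g₃) - c' g₁ g₂ = 0)
    (f' : H → M)
    (hf' : ∀ h₁ h₂ : H, c' ↑h₁ ↑h₂ = f' h₁ - f' (h₁ * h₂) + (↑h₁ : G) • f' h₂) :
    ∃ f : G → M, ∀ g : G, ∀ h ∈ H,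
      c' g h - (f g - f (g * h) + g • f h) = 0 := by
  classical
  set f₀ : G → M := fun g => if hg : g ∈ H then f' ⟨g, hg⟩ else 0 with hf₀def
  set c₁ : G → G → M :=
    fun g₁ g₂ => c' g₁ g₂ - (f₀ g₁ - f₀ (g₁ * g₂) + g₁ • f₀ g₂) with hc₁def
  have hc₁coc : ∀ g₁ g₂ g₃ : G,
      g₁ • c₁ g₂ g₃ - c₁ (g₁ * g₂) g₃ + c₁ g₁ (g₂ * g₃) - c₁ g₁ g₂ = 0 := by
    intro g₁ g₂ g₃
    have h2 := hcoc g₁ g₂ g₃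
    simp only [hc₁def, smul_sub, smul_add, mul_smul, mul_assoc]
    abel_nf
    abel_nf at h2
    exact h2
  have hc₁H : ∀ h₁ h₂ : G, h₁ ∈ H → h₂ ∈ H → c₁ h₁ h₂ = 0 := by
    intro h₁ h₂ hh₁ hh₂
    have hmul : h₁ * h₂ ∈ H := H.mul_mem hh₁ hh₂
    have := hf' ⟨h₁, hh₁⟩ ⟨h₂, hh₂⟩
    simp only [hc₁def, hf₀def, dif_pos hh₁, dif_pos hh₂, dif_pos hmul]
    rw [this]
    simp [Subgroup.coe_mul]
  set r : G → G := fun g => if g ∈ H then 1 else (QuotientGroup.mk g : G ⧸ H).out with hrdef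
  have hr_mem : ∀ g : G, (r g)⁻¹ * g ∈ H := by
    intro g
    by_cases hg : g ∈ H
    · simp [hrdef, if_pos hg, hg]
    · simp only [hrdef, if_neg hg]
      rw [← QuotientGroup.eq]
      exact QuotientGroup.out_eq' _
  have hr_coset : ∀ g h : G, h ∈ H → r (g * h) = r g := by
    intro g h hh
    by_cases hg : g ∈ H
    · simp [hrdef, if_pos hg, if_pos (H.mul_mem hg hh)]
    · have hgh : ¬ g * h ∈ H := fun hmem => hg (by
        have := H.mul_mem hmem (H.inv_mem hh)
        simpa [mul_assoc] using this)
      simp only [hrdef, if_neg hg, if_neg hgh]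
      congr 1
      exact QuotientGroup.mk_mul_of_mem g hh
  refine ⟨fun g => f₀ g - c₁ (r g) ((r g)⁻¹ * g), ?_⟩
  intro g h hh
  have hrg : r (g * h) = r g := hr_coset g h hh
  have hrh : r h = 1 := by simp [hrdef, if_pos hh]
  have hfh0 : c₁ (r h) ((r h)⁻¹ * h) = 0 := by
    rw [hrh]; simpa using hc₁H 1 h H.one_mem hh
  have key := hc₁coc (r g) ((r g)⁻¹ * g) h
  rw [hc₁H _ _ (hr_mem g) hh, smul_zero, mul_inv_cancel_left] at key
  simp only [hrg, hfh0]
  have hassoc : (r g)⁻¹ * (g * h) = (r g)⁻¹ * g * h := by group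
  rw [hassoc]
  have hc₁gh : c₁ g h = c' g h - (f₀ g - f₀ (g * h) + g • f₀ h) := rfl
  have goal_eq : c' g h - (f₀ g - c₁ (r g) ((r g)⁻¹ * g) - (f₀ (g * h) -
      c₁ (r g) ((r g)⁻¹ * g * h)) + g • (f₀ h - 0)) =
      c₁ g h + c₁ (r g) ((r g)⁻¹ * g) - c₁ (r g) ((r g)⁻¹ * g * h) := by
    rw [hc₁gh]; rw [smul_sub, smul_zero]; abel
  rw [goal_eq]
  rw [show c₁ g h + c₁ (r g) ((r g)⁻¹ * g) - c₁ (r g) ((r g)⁻¹ * g * h) =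
    -(0 - c₁ g h + c₁ (r g) ((r g)⁻¹ * g * h) - c₁ (r g) ((r g)⁻¹ * g)) from by abel,
    key, neg_zero]
end

section
/- Let G be a group, H a subgroup of G, and M a G-module. Let u ∈ M and let c : G → M be a 1-cocycle such that c(h) = h·u − u for all h ∈ H. Suppose g, t ∈ G, m ≥ 1 is an integer, and h₀ ∈ H satisfy t^m g = g t h₀. Then, writing A := c(g) − (g·u − u) and B := c(t) − (t·u − u), one has t^m·A − A + Σ_{i=0}^{m−1} t^i·B − g·B = 0 in M. -/
/-- Let `c : G → M` be a 1-cocycle with `c(h) = h·u − u` on a subgroup `H`. If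
`t^m g = g t h₀` with `h₀ ∈ H` and `m ≥ 1`, then, with `A = c(g) − (g·u − u)` and
`B = c(t) − (t·u − u)`, one has `t^m·A − A + Σ_{i=0}^{m−1} t^i·B − g·B = 0`. -/
theorem one_cocycle_monodromy_relation
    {G : Type*} [Group G] {M : Type*} [AddCommGroup M] [DistribMulAction G M]
    (H : Subgroup G) (u : M) (c : G → M)
    (hcoc : ∀ g₁ g₂ : G, c (g₁ * g₂) = c g₁ + g₁ • c g₂)
    (hH : ∀ h ∈ H, c h = h • u - u)
    (g t : G) (m : ℕ) (hm : 1 ≤ m) (h₀ : G) (hh₀ : h₀ ∈ H)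
    (hrel : t ^ m * g = g * t * h₀) :
    t ^ m • (c g - (g • u - u)) - (c g - (g • u - u)) +
      (∑ i ∈ Finset.range m, t ^ i • (c t - (t • u - u))) -
      g • (c t - (t • u - u)) = 0 := by
  set f : G → M := fun x => c x - (x • u - u) with hf
  have hc1 : c 1 = 0 := by
    have := hcoc 1 1
    simpa using this
  have hfc : ∀ a b : G, f (a * b) = f a + a • f b := by
    intro a b
    simp only [hf, hcoc, mul_smul, smul_sub]
    abel
  have hpow : ∀ n : ℕ, f (t ^ n) = ∑ i ∈ Finset.range n, t ^ i • f t := by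
    intro n
    induction n with
    | zero => simp [hf, hc1]
    | succ n ih => rw [pow_succ, hfc, ih, Finset.sum_range_succ]
  have h0 : f h₀ = 0 := by simp [hf, hH h₀ hh₀]
  have e1 := hfc (t ^ m) g
  rw [hrel, hfc (g * t) h₀, h0, smul_zero, add_zero, hfc g t, hpow] at e1
  calc t ^ m • f g - f g + (∑ i ∈ Finset.range m, t ^ i • f t) - g • f t
      = ((∑ i ∈ Finset.range m, t ^ i • f t) + t ^ m • f g) - (f g + g • f t) := by abel
    _ = 0 := by rw [← e1, sub_self]
end

section
/- Let G be a group, H a normal subgroup of G, and M a G-module. Let t ∈ G, let u : ℕ → M be a sequence, and let c be a 2-cocycle on G with values in M such that: (i) c(g, h) = 0 for all g ∈ G and h ∈ H; (ii) c(h, t) = u(0) − h·u(0) for all h ∈ H; (iii) c(t^k, t) = u(k) − t^k·u(0) for all k ∈ ℕ. Then for every integer b ≥ 0 and every h ∈ H, c(h, t^b) = Σ_{k=0}^{b−1} u(k) − h·(Σ_{k=0}^{b−1} u(k)). -/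
/-- Let `c` be a 2-cocycle on `G` with values in a `G`-module `M`, `H` a normal subgroup,
`t ∈ G` and `u : ℕ → M`, such that `c(g,h) = 0` for `h ∈ H`, `c(h,t) = u(0) − h·u(0)` for
`h ∈ H`, and `c(t^k, t) = u(k) − t^k·u(0)` for all `k`. Then
`c(h, t^b) = Σ_{k<b} u(k) − h·Σ_{k<b} u(k)` for all `b ≥ 0` and `h ∈ H`. -/
theorem two_cocycle_values_on_powers
    {G : Type*} [Group G] {M : Type*} [AddCommGroup M] [DistribMulAction G M]
    (H : Subgroup G) [H.Normal] (t : G) (u : ℕ → M) (c : G → G → M)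
    (hcoc : ∀ g₁ g₂ g₃ : G,
      g₁ • c g₂ g₃ - c (g₁ * g₂) g₃ + c g₁ (g₂ * g₃) - c g₁ g₂ = 0)
    (h1 : ∀ g : G, ∀ h ∈ H, c g h = 0)
    (h2 : ∀ h ∈ H, c h t = u 0 - h • u 0)
    (h3 : ∀ k : ℕ, c (t ^ k) t = u k - t ^ k • u 0) :
    ∀ b : ℕ, ∀ h ∈ H,
      c h (t ^ b) = (∑ k ∈ Finset.range b, u k) - h • ∑ k ∈ Finset.range b, u k := by
  intro b
  induction b with
  | zero =>
    intro h hh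
    simp [h1 h 1 H.one_mem]
  | succ b ih =>
    intro h hh
    set h' : G := (t ^ b)⁻¹ * h * t ^ b with hh'def
    have hh' : h' ∈ H := by
      have := Subgroup.Normal.conj_mem ‹H.Normal› h hh (t ^ b)⁻¹
      simpa [hh'def] using this
    set h'' : G := t⁻¹ * h' * t with hh''def
    have hh'' : h'' ∈ H := by
      have := Subgroup.Normal.conj_mem ‹H.Normal› h' hh' t⁻¹
      simpa [hh''def] using this
    have key1 : h * t ^ b = t ^ b * h' := by
      simp [hh'def, mul_assoc]
    have key2 : h' * t = t * h'' := by
      simp [hh''def, mul_assoc]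
    -- c (t^b) (t * h'') = c (t^b) t
    have e1 : c (t ^ b) (t * h'') = c (t ^ b) t := by
      have := hcoc (t ^ b) t h''
      rw [h1 t h'' hh'', h1 _ h'' hh'', smul_zero] at this
      have h4 : c (t ^ b) (t * h'') - c (t ^ b) t = 0 := by abel_nf; abel_nf at this; exact this
      exact sub_eq_zero.mp h4
    -- c (h * t^b) t
    have e2 : c (h * t ^ b) t = t ^ b • c h' t + c (t ^ b) t := by
      have := hcoc (t ^ b) h' t
      rw [h1 _ h' hh', ← key1, key2, e1] at this
      linear_combination (norm := abel) -this
    have e3 : c h (t ^ (b + 1)) = c h (t ^ b) + c (h * t ^ b) t - h • c (t ^ b) t := by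
      have := hcoc h (t ^ b) t
      rw [← pow_succ] at this
      linear_combination (norm := abel) this
    rw [e3, e2, ih h hh, h2 h' hh', h3 b, Finset.sum_range_succ]
    have sm1 : t ^ b • h' • u 0 = h • t ^ b • u 0 := by
      rw [← mul_smul, ← key1, mul_smul]
    rw [smul_sub, smul_sub, smul_add, sm1]
    abel
end

section
/- Let G be a group, H a normal subgroup of G, and M a G-module. Let c be a 2-cocycle on G with values in M such that c(g, h) = 0 for all g ∈ G and h ∈ H, and let u : G → M be a function such that h·u(g) − u(g) = −c(h, g) for all h ∈ H and g ∈ G. Then for all g₁, g₂ ∈ G, the element z := c(g₁, g₂) + u(g₁) − u(g₁g₂) + g₁·u(g₂) satisfies h·z = z for every h ∈ H; that is, z ∈ M^H. -/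
/-- Let `c` be a 2-cocycle on `G` with values in a `G`-module `M`, `H` a normal subgroup with
`c(g,h) = 0` for all `g ∈ G`, `h ∈ H`, and let `u : G → M` satisfy `h·u(g) − u(g) = −c(h,g)`
for all `h ∈ H`, `g ∈ G`. Then `z = c(g₁,g₂) + u(g₁) − u(g₁g₂) + g₁·u(g₂)` is `H`-fixed. -/
theorem two_cocycle_twisted_coboundary_H_fixed
    {G : Type*} [Group G] {M : Type*} [AddCommGroup M] [DistribMulAction G M]
    (H : Subgroup G) [H.Normal] (c : G → G → M) (u : G → M)
    (hcoc : ∀ g₁ g₂ g₃ : G,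
      g₁ • c g₂ g₃ - c (g₁ * g₂) g₃ + c g₁ (g₂ * g₃) - c g₁ g₂ = 0)
    (h1 : ∀ g : G, ∀ h ∈ H, c g h = 0)
    (h2 : ∀ g : G, ∀ h ∈ H, h • u g - u g = - c h g) :
    ∀ g₁ g₂ : G, ∀ h ∈ H,
      h • (c g₁ g₂ + u g₁ - u (g₁ * g₂) + g₁ • u g₂) =
        c g₁ g₂ + u g₁ - u (g₁ * g₂) + g₁ • u g₂ := by
  intro g₁ g₂ h hH
  set h' := g₁⁻¹ * h * g₁ with hh'
  have hH' : h' ∈ H := by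
    have := Subgroup.Normal.conj_mem ‹H.Normal› h hH g₁⁻¹
    simpa [hh', mul_assoc] using this
  set h'' := g₂⁻¹ * h' * g₂ with hh''
  have hH'' : h'' ∈ H := by
    have := Subgroup.Normal.conj_mem ‹H.Normal› h' hH' g₂⁻¹
    simpa [hh'', mul_assoc] using this
  have e1 : h * g₁ = g₁ * h' := by rw [hh']; group
  have e2 : h' * g₂ = g₂ * h'' := by rw [hh'']; group
  -- rearranged h2 facts
  have hu1 : h • u g₁ = u g₁ - c h g₁ := by
    have t := h2 g₁ h hH
    have : h • u g₁ - (u g₁ - c h g₁) = 0 := by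
      rw [show h • u g₁ - (u g₁ - c h g₁) = (h • u g₁ - u g₁) + c h g₁ by abel, t]; abel
    exact sub_eq_zero.mp this
  have hu2 : h • u (g₁ * g₂) = u (g₁ * g₂) - c h (g₁ * g₂) := by
    have t := h2 (g₁ * g₂) h hH
    have : h • u (g₁ * g₂) - (u (g₁ * g₂) - c h (g₁ * g₂)) = 0 := by
      rw [show h • u (g₁ * g₂) - (u (g₁ * g₂) - c h (g₁ * g₂)) =
        (h • u (g₁ * g₂) - u (g₁ * g₂)) + c h (g₁ * g₂) by abel, t]; abel
    exact sub_eq_zero.mp this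
  have hu3 : h' • u g₂ = u g₂ - c h' g₂ := by
    have t := h2 g₂ h' hH'
    have : h' • u g₂ - (u g₂ - c h' g₂) = 0 := by
      rw [show h' • u g₂ - (u g₂ - c h' g₂) = (h' • u g₂ - u g₂) + c h' g₂ by abel, t]; abel
    exact sub_eq_zero.mp this
  -- cocycle consequences
  have hc1 : h • c g₁ g₂ = c (g₁ * h') g₂ - c h (g₁ * g₂) + c h g₁ := by
    have t := hcoc h g₁ g₂
    rw [e1] at t
    have : h • c g₁ g₂ - (c (g₁ * h') g₂ - c h (g₁ * g₂) + c h g₁) =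
        h • c g₁ g₂ - c (g₁ * h') g₂ + c h (g₁ * g₂) - c h g₁ := by abel
    rw [t] at this
    exact sub_eq_zero.mp this
  have hc2 : c (g₁ * h') g₂ = g₁ • c h' g₂ + c g₁ (g₂ * h'') := by
    have t := hcoc g₁ h' g₂
    rw [e2, h1 g₁ h' hH'] at t
    have : c (g₁ * h') g₂ - (g₁ • c h' g₂ + c g₁ (g₂ * h'')) =
        -(g₁ • c h' g₂ - c (g₁ * h') g₂ + c g₁ (g₂ * h'') - 0) := by abel
    rw [t] at this
    simp only [neg_zero] at this
    exact sub_eq_zero.mp this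
  have hc3 : c g₁ (g₂ * h'') = c g₁ g₂ := by
    have t := hcoc g₁ g₂ h''
    rw [h1 g₂ h'' hH'', h1 (g₁ * g₂) h'' hH'', smul_zero] at t
    have : c g₁ (g₂ * h'') - c g₁ g₂ = (0 : M) - 0 + c g₁ (g₂ * h'') - c g₁ g₂ := by abel
    rw [t] at this
    exact sub_eq_zero.mp this
  calc h • (c g₁ g₂ + u g₁ - u (g₁ * g₂) + g₁ • u g₂)
      = h • c g₁ g₂ + h • u g₁ - h • u (g₁ * g₂) + (h * g₁) • u g₂ := by
        rw [smul_add, smul_sub, smul_add, smul_smul]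
    _ = h • c g₁ g₂ + h • u g₁ - h • u (g₁ * g₂) + g₁ • (u g₂ - c h' g₂) := by
        rw [e1, ← smul_smul, hu3]
    _ = (c (g₁ * h') g₂ - c h (g₁ * g₂) + c h g₁) + (u g₁ - c h g₁)
          - (u (g₁ * g₂) - c h (g₁ * g₂)) + (g₁ • u g₂ - g₁ • c h' g₂) := by
        rw [hc1, hu1, hu2, smul_sub]
    _ = (g₁ • c h' g₂ + c g₁ (g₂ * h'')) - c h (g₁ * g₂) + c h g₁ + (u g₁ - c h g₁)
          - (u (g₁ * g₂) - c h (g₁ * g₂)) + (g₁ • u g₂ - g₁ • c h' g₂) := by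
        rw [hc2]
    _ = c g₁ (g₂ * h'') + u g₁ - u (g₁ * g₂) + g₁ • u g₂ := by abel
    _ = c g₁ g₂ + u g₁ - u (g₁ * g₂) + g₁ • u g₂ := by rw [hc3]
end
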